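/- arXiv:2511.14345 — 8 statements merged into one kernel-verified Lean document; each statement's English description precedes it below -/
import Mathlib

section
/- Let q be a prime power, let K be an algebraic closure of F_q, and let t ∈ K satisfy t^(q^2+q+1) = 1. Then every root ε ∈ K of the polynomial t·X^(q+1) + t^(q^2+1)·X + 1 satisfies ε^(q^2+q+1) = 1. -/
theorem stmt_3 (F : Type*) [Field F] [Fintype F] (q : ℕ) (hq : Fintype.card F = q)
    (t : AlgebraicClosure F) (ht : t ^ (q^2 + q + 1) = 1) :
    ∀ ε : AlgebraicClosure F,
      t * ε ^ (q + 1) + t ^ (q^2 + 1) * ε + 1 = 0 → ε ^ (q^2 + q + 1) = 1 := by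
  intro ε h0
  haveI : CharP F (ringChar F) := ringChar.charP F
  obtain ⟨n, hp, hcard⟩ := FiniteField.card F (ringChar F)
  haveI : Fact (ringChar F).Prime := ⟨hp⟩
  haveI : CharP (AlgebraicClosure F) (ringChar F) :=
    charP_of_injective_algebraMap (algebraMap F (AlgebraicClosure F)).injective _
  have hqpn : q = ringChar F ^ (n : ℕ) := by rw [← hq, hcard]
  have htne : t ≠ 0 := by
    intro h
    rw [h, zero_pow (by positivity)] at ht
    exact zero_ne_one ht
  have hq1 : 1 ≤ q := hqpn ▸ Nat.one_le_pow _ _ hp.pos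
  -- t^(q^3) = t
  have htq3 : t ^ (q^3) = t := by
    obtain ⟨m, rfl⟩ : ∃ m, q = m + 1 := ⟨q - 1, by omega⟩
    have hexp : (m+1)^3 = ((m+1)^2 + (m+1) + 1) * m + 1 := by ring
    rw [hexp, pow_add, pow_mul, ht, one_pow, pow_one, one_mul]
  -- apply Frobenius
  have hφ : ∀ x : AlgebraicClosure F,
      iterateFrobenius (AlgebraicClosure F) (ringChar F) n x = x ^ q := fun x => by
    rw [iterateFrobenius_def, hqpn]
  have expand : ∀ a b : AlgebraicClosure F, (a + b) ^ q = a ^ q + b ^ q := fun a b => by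
    rw [hqpn]; exact add_pow_char_pow a b _ _
  have h1 : t ^ q * (ε ^ q) ^ (q+1) + (t ^ q) ^ (q^2+1) * ε ^ q + 1 = 0 := by
    calc t ^ q * (ε ^ q) ^ (q+1) + (t ^ q) ^ (q^2+1) * ε ^ q + 1
        = (t * ε ^ (q+1) + t ^ (q^2+1) * ε + 1) ^ q := by
          rw [expand, expand, mul_pow, mul_pow, one_pow, pow_right_comm ε, pow_right_comm t]
      _ = 0 := by rw [h0]; exact zero_pow (by omega)
  have e1 : (ε ^ q) ^ (q+1) = ε ^ (q^2 + q) := by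
    rw [← pow_mul]; congr 1; ring
  have e2 : (t ^ q) ^ (q^2+1) = t ^ (q+1) := by
    rw [← pow_mul]
    have hqq : q * (q^2 + 1) = q^3 + q := by ring
    rw [hqq, pow_add, htq3, ← pow_succ']
  rw [e1, e2] at h1
  have key : t ^ q * (ε ^ (q^2 + q + 1) - 1) = 0 := by
    linear_combination ε * h1 - t ^ q * h0 + ε * ht
  have htqne : t ^ q ≠ 0 := pow_ne_zero _ htne
  have hfin := (mul_eq_zero.mp key).resolve_left htqne
  exact sub_eq_zero.mp hfin
end

section
/- Let q be a prime power, K an algebraic closure of F_q, and t ∈ K with t^(q^2+q+1) = 1. Then the polynomial t·X^(q+1) + t^(q^2+1)·X + 1 over K is separable, and hence has exactly q + 1 distinct roots in K. -/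
open Polynomial in
open scoped Classical in
theorem stmt_4 (F : Type*) [Field F] [Fintype F] (q : ℕ) (hq : Fintype.card F = q)
    (t : AlgebraicClosure F) (ht : t ^ (q^2 + q + 1) = 1) :
    (C t * X ^ (q + 1) + C (t ^ (q^2 + 1)) * X + 1 :
      Polynomial (AlgebraicClosure F)).Separable ∧
    (C t * X ^ (q + 1) + C (t ^ (q^2 + 1)) * X + 1 :
      Polynomial (AlgebraicClosure F)).roots.toFinset.card = q + 1 := by
  set f : Polynomial (AlgebraicClosure F) :=
    C t * X ^ (q + 1) + C (t ^ (q^2 + 1)) * X + 1 with hf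
  have ht0 : t ≠ 0 := by
    intro h
    rw [h, zero_pow (by positivity)] at ht
    exact zero_ne_one ht
  have hq0 : q ≠ 0 := by
    have := Fintype.card_pos (α := F)
    omega
  have hqK : (q : AlgebraicClosure F) = 0 := by
    rw [← hq, ← map_natCast (algebraMap F (AlgebraicClosure F)),
      FiniteField.cast_card_eq_zero, map_zero]
  have hder : derivative f = C t * X ^ q + C (t ^ (q^2 + 1)) := by
    simp only [hf, derivative_add, derivative_mul, derivative_C, derivative_one,
      derivative_X_pow, derivative_X, C_1]
    push_cast
    rw [hqK]
    simp
  have hsep : f.Separable := by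
    refine ⟨1, -X, ?_⟩
    rw [hder, hf]
    ring
  have hdeg : f.natDegree = q + 1 := by
    rw [hf]
    compute_degree!
    rw [if_neg hq0]
    simpa using ht0
  refine ⟨hsep, ?_⟩
  have hsplit : Multiset.card f.roots = f.natDegree :=
    (splits_iff_card_roots).mp (IsAlgClosed.splits f)
  have hnodup : f.roots.Nodup := nodup_roots hsep
  rw [Multiset.toFinset_card_of_nodup hnodup, hsplit, hdeg]
end

section
/- Let q be a prime power, K an algebraic closure of F_q, and δ ∈ K with δ^(q^2+q+1) = 1. Then every root x ∈ K of the polynomial δ·X^(q+1) + X + δ^(q+1) satisfies x^(q^2+q+1) = 1. -/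
theorem stmt_5 (F : Type*) [Field F] [Fintype F] (q : ℕ) (hq : Fintype.card F = q)
    (δ : AlgebraicClosure F) (hδ : δ ^ (q^2 + q + 1) = 1) :
    ∀ x : AlgebraicClosure F,
      δ * x ^ (q + 1) + x + δ ^ (q + 1) = 0 → x ^ (q^2 + q + 1) = 1 := by
  intro x hx
  -- Frobenius additivity for exponent q = card F
  have hadd : ∀ a b : AlgebraicClosure F, (a + b) ^ q = a ^ q + b ^ q := by
    obtain ⟨p, hp⟩ := CharP.exists F
    haveI := hp
    haveI : Fact p.Prime := ⟨CharP.char_is_prime F p⟩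
    obtain ⟨n, hpp, hcard⟩ := FiniteField.card F p
    haveI : CharP (AlgebraicClosure F) p :=
      charP_of_injective_algebraMap (algebraMap F (AlgebraicClosure F)).injective p
    intro a b
    rw [← hq, hcard]
    exact add_pow_char_pow a b p n
  have hq0 : q ≠ 0 := by
    rw [← hq]; exact Fintype.card_ne_zero
  have hδ0 : δ ≠ 0 := by
    intro h
    rw [h, zero_pow (by positivity)] at hδ
    exact zero_ne_one hδ
  have hfrob : (δ * x ^ (q + 1)) ^ q + x ^ q + (δ ^ (q + 1)) ^ q = 0 := by
    rw [← hadd, ← hadd, hx, zero_pow hq0]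
  have hfrob' : δ ^ q * x ^ ((q + 1) * q) + x ^ q + δ ^ ((q + 1) * q) = 0 := by
    rw [pow_mul, pow_mul, ← mul_pow] at *
    exact hfrob
  have key : δ ^ (q + 1) * x ^ (q ^ 2 + q + 1) = δ ^ (q + 1) * 1 := by
    linear_combination (δ * x) * hfrob' - hx - x * hδ
  exact mul_left_cancel₀ (pow_ne_zero _ hδ0) key
end

section
/- Let q > 2 be a prime power, K an algebraic closure of F_q, and t ∈ K with t^(q^2+q+1) = 1. Then the number of elements γ ∈ K satisfying both γ^(q^4+q^2+1) = 1 and 1 + t·γ^(q^3+1) + t^(q^2+1)·γ^(q^2-q+1) = 0 is exactly q^3 + 1. -/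
/-!
Every solution γ of the equation is automatically a (q⁴+q²+1)-th root of unity: with
a = γ^(q²-q+1), s = t^q and r = s^q the equation reads 1 + t·a·a^q + t·r·a = 0, and its image
under the q-Frobenius is 1 + s·a^q·a^(q²) + s·t·a^q = 0 because t^(q³) = t. Eliminating with
t·s·r = 1 gives a^(1+q+q²) = γ^(q⁴+q²+1) = 1. So the set counted is the root set of the
trinomial 1 + t^(q²+1) X^(q²-q+1) + t X^(q³+1), which is separable since in characteristic p
both exponents are ≡ 1, so that f - X f' = 1. Hence it has q³ + 1 distinct roots.
-/

open Polynomial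

theorem pow_pow_pow_eq_self_of_pow_eq_one {M : Type*} [Monoid M] {t : M} {q : ℕ}
    (ht : t ^ (q ^ 2 + q + 1) = 1) : ((t ^ q) ^ q) ^ q = t := by
  rcases q with _ | q
  · simpa using ht.symm
  · calc ((t ^ (q + 1)) ^ (q + 1)) ^ (q + 1)
        = (t ^ ((q + 1) ^ 2 + (q + 1) + 1)) ^ q * t := by
          rw [← pow_mul, ← pow_mul, ← pow_mul, ← pow_succ]; ring_nf
      _ = t := by rw [ht, one_pow, one_mul]

theorem Polynomial.separable_of_sub_X_mul_derivative_eq_one {R : Type*} [CommRing R] {f : R[X]}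
    (h : f - X * derivative f = 1) : f.Separable :=
  ⟨1, -X, by linear_combination h⟩

theorem Polynomial.X_mul_derivative_C_mul_X_pow_succ {R : Type*} [CommRing R] (a : R) {n : ℕ}
    (hn : ((n + 1 : ℕ) : R) = 1) : X * derivative (C a * X ^ (n + 1)) = C a * X ^ (n + 1) := by
  rw [derivative_C_mul_X_pow, hn, mul_one, Nat.add_sub_cancel, mul_left_comm, ← pow_succ']

theorem Polynomial.trinomial_separable {R : Type*} [CommRing R] {m n : ℕ} (v w : R)
    (hm : ((m + 1 : ℕ) : R) = 1) (hn : ((n + 1 : ℕ) : R) = 1) :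
    (trinomial 0 (m + 1) (n + 1) 1 v w).Separable := by
  refine separable_of_sub_X_mul_derivative_eq_one ?_
  simp only [trinomial_def, derivative_add, mul_add, X_mul_derivative_C_mul_X_pow_succ _ hm,
    X_mul_derivative_C_mul_X_pow_succ _ hn]
  simp

theorem Polynomial.ncard_setOf_isRoot_eq_natDegree {K : Type*} [Field K] [IsAlgClosed K] {f : K[X]}
    (hf : f.Separable) : {x | f.IsRoot x}.ncard = f.natDegree := by
  classical
  have hroots : {x | f.IsRoot x} = ↑f.roots.toFinset := by
    ext x
    simp [mem_roots hf.ne_zero]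
  rw [hroots, Set.ncard_coe_finset, Multiset.toFinset_card_of_nodup (nodup_roots hf),
    IsAlgClosed.card_roots_eq_natDegree]

section FiniteFieldAlgebra

variable {F K : Type*} [Field F] [Fintype F] [Field K] [Algebra F K] {q : ℕ}

theorem pow_eq_one_of_add_mul_pow_add_mul_pow_eq_zero (hq : Fintype.card F = q) {t γ : K}
    (ht : t ^ (q ^ 2 + q + 1) = 1)
    (hγ : 1 + t * γ ^ (q ^ 3 + 1) + t ^ (q ^ 2 + 1) * γ ^ (q ^ 2 - q + 1) = 0) :
    γ ^ (q ^ 4 + q ^ 2 + 1) = 1 := by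
  have hqq : q ≤ q ^ 2 := Nat.le_self_pow two_ne_zero q
  set a := γ ^ (q ^ 2 - q + 1)
  set s := t ^ q
  have h₀ : 1 + t * (a * a ^ q) + t * s ^ q * a = 0 := by
    have hab : γ ^ (q ^ 3 + 1) = a * a ^ q := by
      rw [← pow_succ', ← pow_mul]; congr 1; zify [hqq]; ring
    rw [← hab, ← hγ]; ring
  have h₁ : 1 + s * (a ^ q * (a ^ q) ^ q) + s * t * a ^ q = 0 := by
    have h := congrArg (FiniteField.frobeniusAlgHom F K) h₀
    simp only [map_add, map_mul, map_one, map_zero] at h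
    simp only [FiniteField.coe_frobeniusAlgHom, hq] at h
    linear_combination h - s * a ^ q * pow_pow_pow_eq_self_of_pow_eq_one ht
  have htsr : t * s * s ^ q = 1 := by rw [← ht]; ring
  have hs : s ≠ 0 := left_ne_zero_of_mul_eq_one (b := t * s ^ q) (by rw [← htsr]; ring)
  have habc : a * a ^ q * (a ^ q) ^ q = 1 :=
    mul_left_cancel₀ hs (by linear_combination a * h₁ - s * h₀ + a * htsr)
  calc γ ^ (q ^ 4 + q ^ 2 + 1) = a ^ (q ^ 2 + q + 1) := by
        rw [← pow_mul]; congr 1; zify [hqq]; ring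
    _ = 1 := by rw [← habc]; ring

end FiniteFieldAlgebra

theorem stmt_7_general (F : Type*) [Field F] [Fintype F] (q : ℕ) (hq : Fintype.card F = q)
    (t : AlgebraicClosure F) (ht : t ^ (q^2 + q + 1) = 1) :
    Set.ncard {γ : AlgebraicClosure F | γ ^ (q^4 + q^2 + 1) = 1 ∧
      1 + t * γ ^ (q^3 + 1) + t ^ (q^2 + 1) * γ ^ (q^2 - q + 1) = 0} = q^3 + 1 := by
  have hq1 : 1 < q := hq ▸ Fintype.one_lt_card
  have hqK : (q : AlgebraicClosure F) = 0 := by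
    rw [← hq, ← map_natCast (algebraMap F _), FiniteField.cast_card_eq_zero, map_zero]
  have ht0 : t ≠ 0 := by rintro rfl; simp at ht
  set f := trinomial 0 (q ^ 2 - q + 1) (q ^ 3 + 1) 1 (t ^ (q ^ 2 + 1)) t
  have hset : {γ : AlgebraicClosure F | γ ^ (q^4 + q^2 + 1) = 1 ∧
      1 + t * γ ^ (q^3 + 1) + t ^ (q^2 + 1) * γ ^ (q^2 - q + 1) = 0} = {γ | f.IsRoot γ} := by
    ext γ
    have hev : f.eval γ = 1 + t * γ ^ (q ^ 3 + 1) + t ^ (q ^ 2 + 1) * γ ^ (q ^ 2 - q + 1) := by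
      simp only [f, trinomial_def, eval_add, eval_C, eval_C_mul, eval_X_pow, pow_zero, mul_one]
      ring
    rw [Set.mem_ofPred, Set.mem_ofPred, IsRoot.def, hev, and_iff_right_iff_imp]
    exact pow_eq_one_of_add_mul_pow_add_mul_pow_eq_zero hq ht
  have hdeg : f.natDegree = q ^ 3 + 1 := by
    refine trinomial_natDegree (by omega) ?_ ht0
    have : q ^ 2 < q ^ 3 := Nat.pow_lt_pow_right hq1 (by norm_num)
    omega
  have hsep : f.Separable := trinomial_separable _ _
    (by push_cast [Nat.le_self_pow two_ne_zero q, hqK]; ring)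
    (by push_cast [hqK]; ring)
  rw [hset, ncard_setOf_isRoot_eq_natDegree hsep, hdeg]

theorem stmt_7 (F : Type*) [Field F] [Fintype F] (q : ℕ) (hq : Fintype.card F = q)
    (hq2 : 2 < q) (t : AlgebraicClosure F) (ht : t ^ (q^2 + q + 1) = 1) :
    Set.ncard {γ : AlgebraicClosure F | γ ^ (q^4 + q^2 + 1) = 1 ∧
      1 + t * γ ^ (q^3 + 1) + t ^ (q^2 + 1) * γ ^ (q^2 - q + 1) = 0} = q^3 + 1 :=
  stmt_7_general F q hq t ht
end

section
/- Let q be a prime power, K an algebraic closure of F_q, and γ ∈ K with γ^(q^4+q^2+1) = 1. Set δ = γ^(q^2-q+1). For a (q^2+q+1)-th root of unity t ∈ K, the condition 1 + t·γ^(q^3+1) + t^(q^2+1)·γ^(q^2-q+1) = 0 holds if and only if δ·u^(q+1) + u + δ^(q+1) = 0 where u = t^(-1). Consequently, the number of (q^2+q+1)-th roots of unity t for which the condition holds is exactly q + 1. -/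
/-!
Put `a = γ ^ (q² - q + 1)`, so that `a ^ (q² + q + 1) = 1` and `γ ^ (q³ + 1) = a ^ (q + 1)`.
For `t ^ (q² + q + 1) = 1` one has `t⁻¹ ^ (q + 1) = t ^ q²`, so dividing the condition by `t`
turns it into `a u ^ (q + 1) + u + a ^ (q + 1) = 0` with `u = t⁻¹`. Conversely every root `u`
of this equation is a `(q² + q + 1)`-th root of unity: applying Frobenius and multiplying by
`a u` gives `a ^ (q + 1) (u ^ (q² + q + 1) - 1) = 0`. Finally `P = a X ^ (q + 1) + X + b`, `b ≠ 0`,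
is separable because `q = 0` in `K` and so `P - X P' = b`; hence it has exactly `q + 1`
roots in `K`.
-/

open Polynomial Pointwise

theorem one_add_mul_add_pow_mul_eq_zero_iff {K : Type*} [Field K] {q : ℕ} {t : K}
    (ht : t ^ (q ^ 2 + q + 1) = 1) (a c : K) :
    1 + t * c + t ^ (q ^ 2 + 1) * a = 0 ↔ a * t⁻¹ ^ (q + 1) + t⁻¹ + c = 0 := by
  have ht0 : t ≠ 0 := by rintro rfl; simp at ht
  have hinv : t⁻¹ ^ (q + 1) = t ^ q ^ 2 := by
    rw [inv_pow, inv_eq_of_mul_eq_one_right]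
    rw [← pow_add, ← ht]; ring_nf
  have key : a * t⁻¹ ^ (q + 1) + t⁻¹ + c = t⁻¹ * (1 + t * c + t ^ (q ^ 2 + 1) * a) := by
    rw [hinv]; field_simp; ring
  rw [key, mul_eq_zero, or_iff_right (inv_ne_zero ht0)]

theorem pow_eq_one_of_mul_pow_add_self_add_eq_zero {F R : Type*} [Field F] [Fintype F]
    [CommRing R] [Algebra F R] {q : ℕ} (hq : Fintype.card F = q) {a u : R}
    (ha : a ^ (q ^ 2 + q + 1) = 1) (hu : a * u ^ (q + 1) + u + a ^ (q + 1) = 0) :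
    u ^ (q ^ 2 + q + 1) = 1 := by
  have hfrob := congrArg (FiniteField.frobeniusAlgHom F R) hu
  simp only [map_add, map_mul, map_pow, map_zero, FiniteField.coe_frobeniusAlgHom, hq] at hfrob
  have key : a ^ (q + 1) * (u ^ (q ^ 2 + q + 1) - 1) = 0 := by
    linear_combination (a * u) * hfrob - hu - u * ha
  rwa [((IsUnit.of_pow_eq_one ha (by positivity)).pow _).mul_right_eq_zero, sub_eq_zero] at key

theorem ncard_setOf_mul_pow_add_self_add_eq_zero {K : Type*} [Field K] [IsAlgClosed K] {q : ℕ}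
    (hq : q ≠ 0) (hqK : (q : K) = 0) {a b : K} (ha : a ≠ 0) (hb : b ≠ 0) :
    {u : K | a * u ^ (q + 1) + u + b = 0}.ncard = q + 1 := by
  classical
  set P : K[X] := C a * X ^ (q + 1) + X + C b
  have hdeg : P.natDegree = q + 1 := by
    unfold P; compute_degree!; simpa [hq] using ha
  have hP0 : P ≠ 0 := ne_zero_of_natDegree_gt (n := 0) (by omega)
  have hsep : P.Separable := by
    have hder : derivative P = C a * X ^ q + 1 := by simp [P, hqK]
    have hbb : C b⁻¹ * C b = 1 := by rw [← C_mul, inv_mul_cancel₀ hb, C_1]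
    refine ⟨C b⁻¹, -(C b⁻¹ * X), ?_⟩
    rw [hder]
    linear_combination hbb
  have hset : {u : K | a * u ^ (q + 1) + u + b = 0} = P.rootSet K := by
    ext u; simp [mem_rootSet, hP0, P]
  rw [hset, Set.ncard_eq_toFinset_card', Set.toFinset_card,
    card_rootSet_eq_natDegree hsep (IsAlgClosed.splits _), hdeg]

theorem stmt_8 (F : Type*) [Field F] [Fintype F] (q : ℕ) (hq : Fintype.card F = q)
    (γ : AlgebraicClosure F) (hγ : γ ^ (q^4 + q^2 + 1) = 1) :
    (∀ t : AlgebraicClosure F, t ^ (q^2 + q + 1) = 1 →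
      (1 + t * γ ^ (q^3 + 1) + t ^ (q^2 + 1) * γ ^ (q^2 - q + 1) = 0 ↔
        γ ^ (q^2 - q + 1) * (t⁻¹) ^ (q + 1) + t⁻¹ + (γ ^ (q^2 - q + 1)) ^ (q + 1) = 0)) ∧
    Set.ncard {t : AlgebraicClosure F | t ^ (q^2 + q + 1) = 1 ∧
      1 + t * γ ^ (q^3 + 1) + t ^ (q^2 + 1) * γ ^ (q^2 - q + 1) = 0} = q + 1 := by
  have hqq : q ≤ q ^ 2 := Nat.le_self_pow two_ne_zero q
  set a := γ ^ (q ^ 2 - q + 1)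
  have ha : a ^ (q ^ 2 + q + 1) = 1 := by
    rw [← hγ, ← pow_mul]; congr 1; zify [hqq]; ring
  have hγa : γ ^ (q ^ 3 + 1) = a ^ (q + 1) := by
    rw [← pow_mul]; congr 1; zify [hqq]; ring
  have ha0 : a ≠ 0 := by intro h; simp [h] at ha
  have hiff : ∀ t : AlgebraicClosure F, t ^ (q ^ 2 + q + 1) = 1 →
      (1 + t * γ ^ (q ^ 3 + 1) + t ^ (q ^ 2 + 1) * a = 0 ↔
        a * t⁻¹ ^ (q + 1) + t⁻¹ + a ^ (q + 1) = 0) := fun t ht => by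
    rw [hγa]; exact one_add_mul_add_pow_mul_eq_zero_iff ht _ _
  refine ⟨hiff, ?_⟩
  have hset : {t : AlgebraicClosure F | t ^ (q ^ 2 + q + 1) = 1 ∧
      1 + t * γ ^ (q ^ 3 + 1) + t ^ (q ^ 2 + 1) * a = 0} =
      {u | a * u ^ (q + 1) + u + a ^ (q + 1) = 0}⁻¹ := by
    ext t
    rw [Set.mem_inv, Set.mem_ofPred_eq, Set.mem_ofPred_eq]
    refine ⟨fun ⟨ht, h⟩ => (hiff t ht).mp h, fun hu => ?_⟩
    have ht := pow_eq_one_of_mul_pow_add_self_add_eq_zero hq ha hu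
    rw [inv_pow, inv_eq_one] at ht
    exact ⟨ht, (hiff t ht).mpr hu⟩
  have hq0 : q ≠ 0 := hq ▸ Fintype.card_ne_zero
  have hqK : (q : AlgebraicClosure F) = 0 := by
    rw [← hq, ← map_natCast (algebraMap F _), FiniteField.cast_card_eq_zero, map_zero]
  rw [hset, Set.ncard_inv,
    ncard_setOf_mul_pow_add_self_add_eq_zero hq0 hqK ha0 (pow_ne_zero _ ha0)]
end

section
/- Let q be a prime power, K an algebraic closure of F_q, and a ∈ K a primitive (q^4+q^2+1)-th root of unity. Then the map i ↦ (a^i : a^(i(q^2+1)) : 1) from Z/(q^4+q^2+1) to PG(2, K) is injective; that is, the subplane Π has exactly q^4 + q^2 + 1 points. -/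
theorem stmt_11 (F : Type*) [Field F] [Fintype F] (q : ℕ) (hq : Fintype.card F = q)
    (a : AlgebraicClosure F) (ha : IsPrimitiveRoot a (q^4 + q^2 + 1)) :
    ∀ i j : ℕ, i < q^4 + q^2 + 1 → j < q^4 + q^2 + 1 →
      (∃ c : AlgebraicClosure F, c ≠ 0 ∧
        a ^ i = c * a ^ j ∧
        a ^ (i * (q^2 + 1)) = c * a ^ (j * (q^2 + 1)) ∧
        (1 : AlgebraicClosure F) = c * 1) →
      i = j := by
  rintro i j hi hj ⟨c, hc0, h1, h2, h3⟩
  have hc : c = 1 := by rw [mul_one] at h3; exact h3.symm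
  subst hc
  rw [one_mul] at h1
  exact ha.pow_inj hi hj h1
end

section
/- Let q be a prime power, K an algebraic closure of F_q, and t ∈ K with t^(q^2+q+1) = 1. Define G(x1,x2,x0) = t·x1·x2^q + t^(q^2+1)·x2·x0^q + x0·x1^q. Then for all x1, x2, x0 ∈ K: t · G(x1,x2,x0)^(q^2) = G(x0^(q^2), x1^(q^2), x2^(q^2)). Consequently the curve H_t = {G = 0} is invariant under the Frobenius collineation Φ_Π of the subplane Π. -/
theorem stmt_13 (F : Type*) [Field F] [Fintype F] (q : ℕ) (hq : Fintype.card F = q)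
    (t : AlgebraicClosure F) (ht : t ^ (q^2 + q + 1) = 1) :
    (∀ x1 x2 x0 : AlgebraicClosure F,
      t * (t * x1 * x2 ^ q + t ^ (q^2 + 1) * x2 * x0 ^ q + x0 * x1 ^ q) ^ (q^2)
      = t * x0 ^ (q^2) * (x1 ^ (q^2)) ^ q + t ^ (q^2 + 1) * x1 ^ (q^2) * (x2 ^ (q^2)) ^ q
        + x2 ^ (q^2) * (x0 ^ (q^2)) ^ q) ∧
    ∀ x1 x2 x0 : AlgebraicClosure F,
      t * x1 * x2 ^ q + t ^ (q^2 + 1) * x2 * x0 ^ q + x0 * x1 ^ q = 0 →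
      t * x0 ^ (q^2) * (x1 ^ (q^2)) ^ q + t ^ (q^2 + 1) * x1 ^ (q^2) * (x2 ^ (q^2)) ^ q
        + x2 ^ (q^2) * (x0 ^ (q^2)) ^ q = 0 := by
  have h2 : 2 ≤ q := by rw [← hq]; exact Fintype.one_lt_card
  -- characteristic setup
  obtain ⟨p, hp⟩ := CharP.exists F
  obtain ⟨n, hpp, hn⟩ := FiniteField.card F p
  rw [hq] at hn
  haveI : CharP (AlgebraicClosure F) p :=
    charP_of_injective_algebraMap (algebraMap F (AlgebraicClosure F)).injective p
  haveI : Fact p.Prime := ⟨hpp⟩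
  have hfrob : ∀ x y : AlgebraicClosure F, (x + y) ^ (q^2) = x ^ (q^2) + y ^ (q^2) := by
    intro x y
    have : q ^ 2 = p ^ ((n : ℕ) * 2) := by rw [hn, pow_mul]
    rw [this, add_pow_char_pow]
  have htt : t * t ^ (q^2) = t ^ (q^2 + 1) := by rw [pow_add, pow_one, mul_comm]
  have ht2 : t * (t ^ (q^2 + 1)) ^ (q^2) = 1 := by
    have hle : q ≤ q ^ 2 := by nlinarith
    have e : (q^2 + 1) * q^2 + 1 = (q^2 + q + 1) * (q^2 - q + 1) := by
      zify [hle]; ring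
    calc t * (t ^ (q^2 + 1)) ^ (q^2) = t ^ ((q^2 + 1) * q^2 + 1) := by
          rw [← pow_mul, pow_add, pow_one, mul_comm]
      _ = (t ^ (q^2 + q + 1)) ^ (q^2 - q + 1) := by rw [e, pow_mul]
      _ = 1 := by rw [ht, one_pow]
  have main : ∀ x1 x2 x0 : AlgebraicClosure F,
      t * (t * x1 * x2 ^ q + t ^ (q^2 + 1) * x2 * x0 ^ q + x0 * x1 ^ q) ^ (q^2)
      = t * x0 ^ (q^2) * (x1 ^ (q^2)) ^ q + t ^ (q^2 + 1) * x1 ^ (q^2) * (x2 ^ (q^2)) ^ q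
        + x2 ^ (q^2) * (x0 ^ (q^2)) ^ q := by
    intro x1 x2 x0
    rw [hfrob, hfrob, mul_pow, mul_pow, mul_pow, mul_pow, mul_pow,
      pow_right_comm x2 q, pow_right_comm x0 q, pow_right_comm x1 q]
    linear_combination (x1 ^ (q^2) * (x2 ^ (q^2)) ^ q) * htt
      + (x2 ^ (q^2) * (x0 ^ (q^2)) ^ q) * ht2
  refine ⟨main, fun x1 x2 x0 hG => ?_⟩
  have := main x1 x2 x0
  rw [hG] at this
  rw [← this, zero_pow (by positivity), mul_zero]
end

section
/- Let q be a prime power, a ∈ F_{q^3} \ F_q with a^(q+1) + a + 1 = 0, and set b = a^(q^2+1). Let M be the 3×3 matrix with rows (a, 1, b), (b, a, 1), (1, b, a). Then the transpose of M equals (1 + a^2 + b^2) · M^(-1); equivalently, M · Mᵀ = (1 + a^2 + b^2) · I. In particular, if 1 + a^2 + b^2 ≠ 0 then M is invertible. -/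
open Matrix in
theorem stmt_17 (F : Type*) [Field F] [Fintype F] (q : ℕ) (hq : Fintype.card F = q)
    (a : AlgebraicClosure F) (ha3 : a ^ (q^3) = a) (haF : a ^ q ≠ a)
    (ha : a ^ (q + 1) + a + 1 = 0)
    (b : AlgebraicClosure F) (hb : b = a ^ (q^2 + 1)) :
    (!![a, 1, b; b, a, 1; 1, b, a] * (!![a, 1, b; b, a, 1; 1, b, a])ᵀ
      = (1 + a^2 + b^2) • (1 : Matrix (Fin 3) (Fin 3) (AlgebraicClosure F))) ∧
    (1 + a^2 + b^2 ≠ 0 →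
      IsUnit (!![a, 1, b; b, a, 1; 1, b, a]) ∧
      (!![a, 1, b; b, a, 1; 1, b, a])ᵀ
        = (1 + a^2 + b^2) • (!![a, 1, b; b, a, 1; 1, b, a])⁻¹) := by
  have hp : (ringChar F).Prime := CharP.char_is_prime F (ringChar F)
  haveI : Fact (ringChar F).Prime := ⟨hp⟩
  haveI : CharP (AlgebraicClosure F) (ringChar F) :=
    charP_of_injective_algebraMap (algebraMap F (AlgebraicClosure F)).injective (ringChar F)
  obtain ⟨n, -, hcard⟩ := FiniteField.card F (ringChar F)
  have hqpn : q = ringChar F ^ (n : ℕ) := by rw [← hq, hcard]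
  have frob : ∀ x y : AlgebraicClosure F, (x + y) ^ q = x ^ q + y ^ q := by
    intro x y
    rw [hqpn]
    exact add_pow_char_pow (R := AlgebraicClosure F) (p := ringChar F) (n := (n:ℕ)) (x := x) (y := y)
  have hc : a ^ q * a + a + 1 = 0 := by
    have h1 : a ^ (q + 1) = a ^ q * a := by rw [pow_add, pow_one]
    rw [← h1]; exact ha
  have hE2 : a ^ (q ^ 2) * a ^ q + a ^ q + 1 = 0 := by
    have h0 : (a ^ q * a + a + 1) ^ q = 0 := by
      rw [hc]; simp [hqpn, pow_eq_zero_iff, hp.pos.ne']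
    rw [frob, frob, mul_pow, one_pow, ← pow_mul] at h0
    rwa [← pow_two] at h0
  have hc1 : a ^ q + 1 ≠ 0 := by
    intro h
    have hcm : a ^ q = -1 := by linear_combination h
    rw [hcm] at hc
    have : (1 : AlgebraicClosure F) = 0 := by linear_combination hc
    exact one_ne_zero this
  have hX : a ^ (q ^ 2) * a + a ^ (q ^ 2) + 1 = 0 := by
    have h0 : (a ^ q + 1) * (a ^ (q ^ 2) * a + a ^ (q ^ 2) + 1) = 0 := by
      linear_combination a ^ (q ^ 2) * hc + hE2
    rcases mul_eq_zero.mp h0 with h | h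
    · exact absurd h hc1
    · exact h
  have hb' : b = a ^ (q ^ 2) * a := by rw [hb, pow_add, pow_one]
  have hkey : a * b + a + b = 0 := by
    rw [hb']; linear_combination a * hX
  have hMMt : !![a, 1, b; b, a, 1; 1, b, a] * (!![a, 1, b; b, a, 1; 1, b, a])ᵀ
      = (1 + a^2 + b^2) • (1 : Matrix (Fin 3) (Fin 3) (AlgebraicClosure F)) := by
    ext i j
    fin_cases i <;> fin_cases j <;>
      simp [Matrix.mul_apply, Fin.sum_univ_succ, Matrix.one_apply, Matrix.smul_apply,
        Matrix.transpose_apply, Matrix.vecHead, Matrix.vecTail] <;>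
      first | linear_combination hkey | ring
  refine ⟨hMMt, fun hs => ?_⟩
  have hmul : !![a, 1, b; b, a, 1; 1, b, a] *
      ((1 + a^2 + b^2)⁻¹ • (!![a, 1, b; b, a, 1; 1, b, a])ᵀ) = 1 := by
    rw [Matrix.mul_smul, hMMt, smul_smul, inv_mul_cancel₀ hs, one_smul]
  refine ⟨⟨⟨_, _, hmul, mul_eq_one_comm.mp hmul⟩, rfl⟩, ?_⟩
  rw [Matrix.inv_eq_right_inv hmul, smul_smul, mul_inv_cancel₀ hs, one_smul]
end
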